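/- Let R be a ring, V an R-R-bimodule and v: R → V a map of R-R-bimodules that is a pure monomorphism of right R-modules, so that (Cyl_v, γ, σ) with Cyl_v(M) = M ⊕ (V ⊗_R M) is a cylinder for (Mono, Mono^□) on left R-modules. Then this cylinder is cartesian if and only if V is flat as a right R-module. -/

import Mathlib

/-!
Common definitions: weak factorization systems, functorial cylinders,
Cisinski's construction, localizers, locally presentable categories.
-/

universe w v u u₁ u₂ u₃

open CategoryTheory Limits Opposite

namespace Paper

variable {K : Type u} [Category.{v} K]

/-- The class of maps with the right lifting property against all maps in `H`. -/
def Rlp (H : MorphismProperty K) : MorphismProperty K :=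
  fun _ _ g => ∀ ⦃A B : K⦄ (h : A ⟶ B), H h → HasLiftingProperty h g

/-- The class of maps with the left lifting property against all maps in `H`. -/
def Llp (H : MorphismProperty K) : MorphismProperty K :=
  fun _ _ f => ∀ ⦃A B : K⦄ (h : A ⟶ B), H h → HasLiftingProperty f h

/-- Weak factorization system. -/
structure IsWFS (L R : MorphismProperty K) : Prop where
  llp_eq : L = Llp R
  rlp_eq : R = Rlp L
  factor : ∀ ⦃X Y : K⦄ (f : X ⟶ Y),
    ∃ (Z : K) (l : X ⟶ Z) (r : Z ⟶ Y), L l ∧ R r ∧ l ≫ r = f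

/-- A class of maps is essentially a (small) set. -/
def IsSmallClass (I : MorphismProperty K) : Prop :=
  Small.{v} (Σ (X : K) (Y : K), { f : X ⟶ Y // I f })

/-- Every object is cofibrant. -/
def AllCofibrant [HasInitial K] (L : MorphismProperty K) : Prop :=
  ∀ X : K, L (initial.to X)

/-- `L` is cofibrantly generated (by a set). -/
def CofGenerated (L : MorphismProperty K) : Prop :=
  ∃ I : MorphismProperty K, IsSmallClass I ∧ L = Llp (Rlp I)

/-- intersection of two classes of maps -/
def interClass (A B : MorphismProperty K) : MorphismProperty K := fun _ _ f => A f ∧ B f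

/-- closed under retracts in the arrow category -/
def RetractClosed (W : MorphismProperty K) : Prop :=
  ∀ ⦃f g : Arrow K⦄ (i : f ⟶ g) (r : g ⟶ f), i ≫ r = 𝟙 f → W g.hom → W f.hom

/-- the 2-out-of-3 property -/
def TwoOutOfThree (W : MorphismProperty K) : Prop :=
  (∀ ⦃X Y Z : K⦄ (f : X ⟶ Y) (g : Y ⟶ Z), W f → W g → W (f ≫ g)) ∧
  (∀ ⦃X Y Z : K⦄ (f : X ⟶ Y) (g : Y ⟶ Z), W f → W (f ≫ g) → W g) ∧
  (∀ ⦃X Y Z : K⦄ (f : X ⟶ Y) (g : Y ⟶ Z), W g → W (f ≫ g) → W f)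

/-- Quillen model structure, given by cofibrations, weak equivalences and fibrations. -/
structure IsModelStructure (Cof W Fib : MorphismProperty K) : Prop where
  retractClosed : RetractClosed W
  twoOutOfThree : TwoOutOfThree W
  wfs₁ : IsWFS Cof (interClass W Fib)
  wfs₂ : IsWFS (interClass Cof W) Fib

/-- the functor `X ↦ X + X` -/
@[simps] noncomputable def double (K : Type u) [Category.{v} K] [HasBinaryCoproducts K] :
    K ⥤ K where
  obj X := X ⨿ X
  map f := coprod.map f f

/-- A functorial cylinder: a functor `C` together with natural transformations
`γ : X + X ⟶ C X` and `σ : C X ⟶ X` factoring the codiagonal. -/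
structure Cylinder (K : Type u) [Category.{v} K] [HasBinaryCoproducts K] where
  C : K ⥤ K
  γ : double K ⟶ C
  σ : C ⟶ 𝟭 K
  fac : ∀ X : K, γ.app X ≫ σ.app X = coprod.desc (𝟙 X) (𝟙 X)

namespace Cylinder
variable [HasBinaryCoproducts K] (cyl : Cylinder K)

/-- `γ⁰` -/
noncomputable def γ₀ : 𝟭 K ⟶ cyl.C where
  app X := coprod.inl ≫ cyl.γ.app X
  naturality X Y f := by
    have h := cyl.γ.naturality f
    dsimp [double] at h ⊢
    rw [Category.assoc, ← h, ← Category.assoc, ← Category.assoc, coprod.inl_map]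

/-- `γ¹` -/
noncomputable def γ₁ : 𝟭 K ⟶ cyl.C where
  app X := coprod.inr ≫ cyl.γ.app X
  naturality X Y f := by
    have h := cyl.γ.naturality f
    dsimp [double] at h ⊢
    rw [Category.assoc, ← h, ← Category.assoc, ← Category.assoc, coprod.inr_map]

/-- `(Cyl, γ, σ)` is a cylinder for a weak factorization system whose left class is `L`
if each `γ_X` lies in `L`. -/
def IsCylinderFor (L : MorphismProperty K) : Prop := ∀ X : K, L (cyl.γ.app X)

/-- the cylinder is final if each `σ_X` lies in `R`. -/
def IsFinal (R : MorphismProperty K) : Prop := ∀ X : K, R (cyl.σ.app X)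

end Cylinder

section Star
variable [HasPushouts K] {F F' : K ⥤ K}

/-- `f ⋆ α`: the induced map from the pushout of `F f` along `α_X` to `F' Y`. -/
noncomputable def starMap (α : F ⟶ F') {X Y : K} (f : X ⟶ Y) :
    pushout (F.map f) (α.app X) ⟶ F'.obj Y :=
  pushout.desc (α.app Y) (F'.map f) (α.naturality f)

/-- the class `L` is stable under `(−) ⋆ α`. -/
def StableUnderStar (L : MorphismProperty K) (α : F ⟶ F') : Prop :=
  ∀ ⦃X Y : K⦄ (f : X ⟶ Y), L f → L (starMap α f)

/-- the class `I ⋆ α = { f ⋆ α | f ∈ I }`. -/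
def starClass (α : F ⟶ F') (I : MorphismProperty K) : MorphismProperty K :=
  fun _ _ g => ∃ (X Y : K) (f : X ⟶ Y), I f ∧ Arrow.mk g = Arrow.mk (starMap α f)

end Star

/-- the cylinder is cartesian with respect to the left class `L`:
the cylinder functor is a left adjoint and `L` is stable under `⋆γ`, `⋆γ⁰` and `⋆γ¹`. -/
structure Cylinder.IsCartesian [HasBinaryCoproducts K] [HasPushouts K]
    (cyl : Cylinder K) (L : MorphismProperty K) : Prop where
  leftAdjoint : cyl.C.IsLeftAdjoint
  star_γ : StableUnderStar L cyl.γ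
  star_γ₀ : StableUnderStar L cyl.γ₀
  star_γ₁ : StableUnderStar L cyl.γ₁

section Lambda
variable [HasBinaryCoproducts K] [HasPushouts K]

/-- `Λⁿ(Cyl,S,I)` -/
noncomputable def LambdaN (cyl : Cylinder K) (S I : MorphismProperty K) :
    ℕ → MorphismProperty K
  | 0 => fun _ _ f => S f ∨ starClass cyl.γ₀ I f ∨ starClass cyl.γ₁ I f
  | n + 1 => starClass cyl.γ (LambdaN cyl S I n)

/-- `Λ(Cyl,S,I)` -/
noncomputable def Lambda (cyl : Cylinder K) (S I : MorphismProperty K) :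
    MorphismProperty K :=
  fun _ _ f => ∃ n : ℕ, LambdaN cyl S I n f

/-- `T` is fibrant if `T → 1` has the right lifting property against `Λ(Cyl,S,I)`. -/
noncomputable def Fibrant [HasTerminal K] (cyl : Cylinder K) (S I : MorphismProperty K)
    (T : K) : Prop :=
  Rlp (Lambda cyl S I) (terminal.from T)

end Lambda

/-- `f` and `g` are homotopic: `(f|g)` factors through `γ_X`. -/
def Htp [HasBinaryCoproducts K] (cyl : Cylinder K) {X Y : K} (f g : X ⟶ Y) : Prop :=
  ∃ h : cyl.C.obj X ⟶ Y, cyl.γ.app X ≫ h = coprod.desc f g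

/-- symmetric-transitive closure of a relation -/
inductive STClos {α : Sort*} (r : α → α → Prop) : α → α → Prop
  | base : ∀ {x y : α}, r x y → STClos r x y
  | symm : ∀ {x y : α}, STClos r x y → STClos r y x
  | trans : ∀ {x y z : α}, STClos r x y → STClos r y z → STClos r x z

/-- the homotopy equivalence relation `∼`, the symmetric-transitive closure of `≃`. -/
def HtpEq [HasBinaryCoproducts K] (cyl : Cylinder K) {X Y : K} : (X ⟶ Y) → (X ⟶ Y) → Prop :=
  STClos (Htp cyl)

/-- `W(Cyl,S,I)`: the maps `f : X ⟶ Y` such that for every fibrant `T` the induced map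
`Hom(Y,T)/∼ → Hom(X,T)/∼` is bijective (expressed elementwise). -/
noncomputable def Weq [HasBinaryCoproducts K] [HasPushouts K] [HasTerminal K]
    (cyl : Cylinder K) (S I : MorphismProperty K) : MorphismProperty K :=
  fun X Y f => ∀ T : K, Fibrant cyl S I T →
    (∀ t : X ⟶ T, ∃ u : Y ⟶ T, HtpEq cyl (f ≫ u) t) ∧
    (∀ u v : Y ⟶ T, HtpEq cyl (f ≫ u) (f ≫ v) → HtpEq cyl u v)

/-- pushout stability of a class of maps -/
def StableUnderPushout (L : MorphismProperty K) : Prop :=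
  ∀ ⦃A B A' B' : K⦄ ⦃f : A ⟶ B⦄ ⦃g : A ⟶ A'⦄ ⦃f' : A' ⟶ B'⦄ ⦃g' : B ⟶ B'⦄,
    IsPushout g f f' g' → L f → L f'

/-- closure under transfinite composition of smooth (colimit preserving) chains -/
def ClosedUnderTransfiniteComposition (L : MorphismProperty K) : Prop :=
  ∀ (o : Ordinal.{v}) (ho : (0 : Ordinal.{v}) < o)
    (D : (Set.Iio o : Set Ordinal.{v}) ⥤ K),
    Nonempty (PreservesColimits D) →
    (∀ (β : Ordinal.{v}) (hβ : β + 1 < o),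
      L (D.map (homOfLE (Subtype.mk_le_mk.mpr (CanonicallyOrderedAdd.le_self_add β 1)) :
        (⟨β, lt_of_le_of_lt (CanonicallyOrderedAdd.le_self_add β 1) hβ⟩ : (Set.Iio o : Set Ordinal.{v})) ⟶
        ⟨β + 1, hβ⟩))) →
    ∀ (c : Cocone D), IsColimit c → L (c.ι.app ⟨0, ho⟩)

/-- A localizer for the class `Cof`: a class `W` with the 2-out-of-3 property, containing
`Cof^□`, and whose intersection with `Cof` is closed under pushouts and transfinite
compositions. -/
structure IsLocalizer (Cof W : MorphismProperty K) : Prop where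
  twoOutOfThree : TwoOutOfThree W
  rlp_le : ∀ ⦃X Y : K⦄ (f : X ⟶ Y), Rlp Cof f → W f
  pushout : StableUnderPushout (interClass Cof W)
  transfinite : ClosedUnderTransfiniteComposition (interClass Cof W)

/-- `W(S)`: the smallest localizer for `Cof` containing `S` (the intersection of all of them). -/
def smallestLocalizer (Cof S : MorphismProperty K) : MorphismProperty K :=
  fun _ _ f => ∀ W : MorphismProperty K, IsLocalizer Cof W →
    (∀ ⦃A B : K⦄ (s : A ⟶ B), S s → W s) → W f

/-- the smallest class containing `S` which is a localizer for `Cof` and moreover closed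
under retracts in the arrow category. -/
def smallestRetractLocalizer (Cof S : MorphismProperty K) : MorphismProperty K :=
  fun _ _ f => ∀ W : MorphismProperty K, IsLocalizer Cof W → RetractClosed W →
    (∀ ⦃A B : K⦄ (s : A ⟶ B), S s → W s) → W f

/-- the empty class of maps -/
def emptyClass (K : Type u) [Category.{v} K] : MorphismProperty K := fun _ _ _ => False

/-- a preorder is `κ`-directed if every subset of cardinality `< κ` has an upper bound -/
def IsCardinalDirected (κ : Cardinal.{v}) (J : Type v) [Preorder J] : Prop :=
  ∀ S : Set J, Cardinal.mk S < κ → ∃ j : J, ∀ s ∈ S, s ≤ j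

/-- an object `X` is `κ`-presentable if `Hom(X,-)` preserves `κ`-directed colimits -/
def IsPresentableObj (κ : Cardinal.{v}) (X : K) : Prop :=
  ∀ (J : Type v) [Preorder J], IsCardinalDirected κ J →
    Nonempty (PreservesColimitsOfShape J (coyoneda.obj (op X)))

/-- `X` is a `κ`-directed colimit of objects from the set `A` -/
def IsDirectedColimitFrom (κ : Cardinal.{v}) (A : Set K) (X : K) : Prop :=
  ∃ (J : Type v) (pre : Preorder J),
    letI := pre
    IsCardinalDirected κ J ∧
      ∃ (D : J ⥤ K) (c : Cocone D), Nonempty (IsColimit c) ∧ c.pt = X ∧ ∀ j : J, D.obj j ∈ A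

/-- `κ`-accessible category -/
structure IsCardinalAccessible (κ : Cardinal.{v}) (K : Type u) [Category.{v} K] : Prop where
  isRegular : κ.IsRegular
  hasDirectedColimits :
    ∀ (J : Type v) [Preorder J], IsCardinalDirected κ J → HasColimitsOfShape J K
  generators : ∃ A : Set K, Small.{v} A ∧ (∀ X ∈ A, IsPresentableObj κ X) ∧
    ∀ X : K, IsDirectedColimitFrom κ A X

/-- accessible category -/
def IsAccessibleCat (K : Type u) [Category.{v} K] : Prop :=
  ∃ κ : Cardinal.{v}, IsCardinalAccessible κ K

/-- locally presentable category: accessible and cocomplete -/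
def IsLocallyPresentable (K : Type u) [Category.{v} K] : Prop :=
  IsAccessibleCat K ∧ HasColimits K

/-- `F` preserves `κ`-directed colimits -/
def PreservesCardinalDirectedColimits (κ : Cardinal.{v}) {A : Type u₁} [Category.{v} A]
    {C : Type u₂} [Category.{v} C] (F : A ⥤ C) : Prop :=
  ∀ (J : Type v) [Preorder J], IsCardinalDirected κ J →
    Nonempty (PreservesColimitsOfShape J F)

/-- accessible functor -/
def IsAccessibleFunctor {A : Type u₁} [Category.{v} A] {C : Type u₂} [Category.{v} C]
    (F : A ⥤ C) : Prop :=
  ∃ κ : Cardinal.{v}, IsCardinalAccessible κ A ∧ IsCardinalAccessible κ C ∧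
    PreservesCardinalDirectedColimits κ F

/-- dual strong deformation retract -/
def DualStrongDeformationRetract [HasBinaryCoproducts K] (cyl : Cylinder K)
    {X Y : K} (f : X ⟶ Y) : Prop :=
  ∃ (g : Y ⟶ X) (h : cyl.C.obj X ⟶ X),
    g ≫ f = 𝟙 Y ∧ cyl.γ₀.app X ≫ h = 𝟙 X ∧ cyl.γ₁.app X ≫ h = f ≫ g ∧
      h ≫ f = cyl.σ.app X ≫ f


section Modules
set_option linter.unusedSectionVars false

variable (R V : Type u) [Ring R] [AddCommGroup V] [Module R V] [Module Rᵐᵒᵖ V]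
  [SMulCommClass R Rᵐᵒᵖ V]

def relators (M : Type u) [AddCommGroup M] [Module R M] :
    Submodule R (TensorProduct ℤ V M) :=
  Submodule.span R
    { t | ∃ (w : V) (r : R) (m : M), t = (MulOpposite.op r • w) ⊗ₜ[ℤ] m - w ⊗ₜ[ℤ] (r • m) }

abbrev NTensor (M : Type u) [AddCommGroup M] [Module R M] : Type u :=
  TensorProduct ℤ V M ⧸ relators R V M

variable {R}

/-- the `R`-linear map `V ⊗_ℤ M → V ⊗_ℤ N` induced by `f`. -/
noncomputable def tmap {M N : Type u} [AddCommGroup M] [Module R M]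
    [AddCommGroup N] [Module R N] (f : M →ₗ[R] N) :
    TensorProduct ℤ V M →ₗ[R] TensorProduct ℤ V N where
  toFun := TensorProduct.map (LinearMap.id : V →ₗ[ℤ] V) f.toAddMonoidHom.toIntLinearMap
  map_add' := map_add _
  map_smul' r t := by
    simp only [RingHom.id_apply]
    induction t using TensorProduct.induction_on with
    | zero => simp
    | tmul w m => simp [TensorProduct.smul_tmul']
    | add x y hx hy => simp [smul_add, hx, hy]

@[simp] lemma tmap_tmul {M N : Type u} [AddCommGroup M] [Module R M]
    [AddCommGroup N] [Module R N] (f : M →ₗ[R] N) (w : V) (m : M) :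
    tmap V f (w ⊗ₜ[ℤ] m) = w ⊗ₜ[ℤ] (f m) := by
  simp [tmap]

/-- the map `V ⊗_R M → V ⊗_R N` induced by `f`. -/
noncomputable def ntMap {M N : Type u} [AddCommGroup M] [Module R M]
    [AddCommGroup N] [Module R N] (f : M →ₗ[R] N) :
    NTensor R V M →ₗ[R] NTensor R V N :=
  Submodule.mapQ (relators R V M) (relators R V N) (tmap V f) (by
    rw [relators, Submodule.span_le]
    rintro t ⟨w, r, m, rfl⟩
    simp only [SetLike.mem_coe, Submodule.mem_comap, map_sub, tmap_tmul, map_smul]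
    exact Submodule.subset_span ⟨w, r, f m, rfl⟩)

@[simp] lemma ntMap_mk {M N : Type u} [AddCommGroup M] [Module R M]
    [AddCommGroup N] [Module R N] (f : M →ₗ[R] N) (t : TensorProduct ℤ V M) :
    ntMap V f (Submodule.Quotient.mk t) = Submodule.Quotient.mk (tmap V f t) :=
  Submodule.mapQ_apply _ _ _ t

lemma tmap_id {M : Type u} [AddCommGroup M] [Module R M] :
    tmap V (LinearMap.id : M →ₗ[R] M) = LinearMap.id := by
  refine LinearMap.ext fun t => ?_
  induction t using TensorProduct.induction_on with
  | zero => simp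
  | tmul w m => simp
  | add x y hx hy => simp [map_add, hx, hy]

lemma ntMap_id {M : Type u} [AddCommGroup M] [Module R M] :
    ntMap V (LinearMap.id : M →ₗ[R] M) = LinearMap.id := by
  refine LinearMap.ext fun q => ?_
  obtain ⟨t, rfl⟩ := Submodule.Quotient.mk_surjective _ q
  rw [ntMap_mk, tmap_id]
  rfl

lemma tmap_comp {M N P : Type u} [AddCommGroup M] [Module R M] [AddCommGroup N]
    [Module R N] [AddCommGroup P] [Module R P] (f : M →ₗ[R] N) (g : N →ₗ[R] P) :
    tmap V (g.comp f) = (tmap V g).comp (tmap V f) := by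
  refine LinearMap.ext fun t => ?_
  induction t using TensorProduct.induction_on with
  | zero => simp
  | tmul w m => simp
  | add x y hx hy => simp [map_add, hx, hy]

lemma ntMap_comp {M N P : Type u} [AddCommGroup M] [Module R M] [AddCommGroup N]
    [Module R N] [AddCommGroup P] [Module R P] (f : M →ₗ[R] N) (g : N →ₗ[R] P) :
    ntMap V (g.comp f) = (ntMap V g).comp (ntMap V f) := by
  refine LinearMap.ext fun q => ?_
  obtain ⟨t, rfl⟩ := Submodule.Quotient.mk_surjective _ q
  simp [tmap_comp]

/-- the cylinder functor `M ↦ M ⊕ (V ⊗_R M)` on left `R`-modules -/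
noncomputable def cylFunctor : ModuleCat.{u} R ⥤ ModuleCat.{u} R where
  obj M := ModuleCat.of R (M × NTensor R V M)
  map {M N} f := ModuleCat.ofHom (LinearMap.prodMap f.hom (ntMap V f.hom))
  map_id M := by
    refine ModuleCat.hom_ext (LinearMap.ext fun x => ?_)
    show (x.1, ntMap V (LinearMap.id : M →ₗ[R] M) x.2) = (x.1, x.2)
    rw [ntMap_id]
    rfl
  map_comp {M N P} f g := by
    refine ModuleCat.hom_ext (LinearMap.ext fun x => ?_)
    show (g.hom (f.hom x.1), ntMap V (g.hom.comp f.hom) x.2)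
        = (g.hom (f.hom x.1), ntMap V g.hom (ntMap V f.hom x.2))
    rw [ntMap_comp]
    rfl

variable (R)

/-- the map `M ≅ R ⊗_R M → V ⊗_R M` induced by `v : R → V` -/
noncomputable def vMap (v : R →ₗ[R] V) (hv : ∀ x s : R, v (x * s) = MulOpposite.op s • v x)
    (M : Type u) [AddCommGroup M] [Module R M] : M →ₗ[R] NTensor R V M where
  toFun m := Submodule.Quotient.mk ((v 1) ⊗ₜ[ℤ] m)
  map_add' m m' := by rw [TensorProduct.tmul_add, Submodule.Quotient.mk_add]
  map_smul' r m := by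
    simp only [RingHom.id_apply]
    have key : r • v 1 = MulOpposite.op r • v 1 := by
      rw [← map_smul v r 1, smul_eq_mul, mul_one, ← hv 1 r, one_mul]
    rw [← Submodule.Quotient.mk_smul, TensorProduct.smul_tmul', key]
    refine (Submodule.Quotient.eq _).mpr ?_
    have hgen : ((MulOpposite.op r • v 1) ⊗ₜ[ℤ] m - (v 1) ⊗ₜ[ℤ] (r • m)) ∈ relators R V M :=
      Submodule.subset_span ⟨v 1, r, m, rfl⟩
    have h := neg_mem hgen
    rwa [neg_sub] at h


section CylV
variable (R : Type u) [Ring R] (V : Type u) [AddCommGroup V] [Module R V]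
  [Module Rᵐᵒᵖ V] [SMulCommClass R Rᵐᵒᵖ V]
  (v : R →ₗ[R] V) (hv : ∀ x s : R, v (x * s) = MulOpposite.op s • v x)

/-- `γ⁰_M : M → Cyl_v M`, the first inclusion -/
noncomputable def cylInl (M : ModuleCat.{u} R) : M ⟶ (cylFunctor (R := R) V).obj M :=
  ModuleCat.ofHom (LinearMap.prod LinearMap.id 0)

/-- `γ¹_M = (id_M, v ⊗ id_M) : M → Cyl_v M` -/
noncomputable def cylInr (M : ModuleCat.{u} R) : M ⟶ (cylFunctor (R := R) V).obj M :=
  ModuleCat.ofHom (LinearMap.prod LinearMap.id (vMap R V v hv M))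

lemma cylInl_natural {M N : ModuleCat.{u} R} (f : M ⟶ N) :
    f ≫ cylInl R V N = cylInl R V M ≫ (cylFunctor (R := R) V).map f := by
  refine ModuleCat.hom_ext (LinearMap.ext fun m => ?_)
  show (f.hom m, (0 : NTensor R V N)) = (f.hom m, ntMap V f.hom 0)
  rw [map_zero]

lemma cylInr_natural {M N : ModuleCat.{u} R} (f : M ⟶ N) :
    f ≫ cylInr R V v hv N = cylInr R V v hv M ≫ (cylFunctor (R := R) V).map f := by
  refine ModuleCat.hom_ext (LinearMap.ext fun m => ?_)
  show (f.hom m, vMap R V v hv N (f.hom m)) = (f.hom m, ntMap V f.hom (vMap R V v hv M m))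
  have h : ntMap V f.hom (vMap R V v hv M m) = vMap R V v hv N (f.hom m) := by
    show ntMap V f.hom (Submodule.Quotient.mk ((v 1) ⊗ₜ[ℤ] m)) = _
    rw [ntMap_mk, tmap_tmul]
    rfl
  rw [h]

/-- the cylinder `(Cyl_v, γ, σ)` on the category of left `R`-modules -/
noncomputable def cylV : Cylinder (ModuleCat.{u} R) where
  C := cylFunctor (R := R) V
  γ :=
  { app := fun M => coprod.desc (cylInl R V M) (cylInr R V v hv M)
    naturality := fun M N f => by
      dsimp [double]
      rw [coprod.map_desc, coprod.desc_comp, cylInl_natural, cylInr_natural] }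
  σ :=
  { app := fun M => ModuleCat.ofHom (LinearMap.fst R M (NTensor R V M))
    naturality := fun M N f => by
      refine ModuleCat.hom_ext (LinearMap.ext fun x => ?_)
      show f.hom x.1 = f.hom x.1
      rfl }
  fac := fun M => by
    refine (coprod.desc_comp ..).trans ?_
    congr 1
    all_goals exact ModuleCat.hom_ext (LinearMap.ext fun m => rfl)

end CylV

/-!
In left `R`-modules the pushout of `a : A → B` and `b : A → C` is `(B × C) / {(a x, -b x)}`,
so the corner map of a commutative square is injective exactly when any `y ∈ B`, `z ∈ C`
with the same image in the corner come from a common `x ∈ A`. For `Cyl_v` this makes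
`f ⋆ γ⁰` injective iff `V ⊗ f` is, so cartesianness forces flatness of `V`. Conversely, if
`V` is flat then `f ⋆ γ¹` is injective, and so is `f ⋆ γ`: purity of `v` (applied to `N / M`)
and flatness make the square formed by `f`, `V ⊗ f` and `v ⊗ −` a pullback. Finally `Cyl_v`
is always a left adjoint, with right adjoint `Z ↦ Z × Hom_R(V, Z)` by the tensor–hom
adjunction.
-/

section PushoutCorner
variable {R} {A B C : ModuleCat.{u} R} (a : A ⟶ B) (b : A ⟶ C)

noncomputable def ModuleCat.quotientPushoutCocone : PushoutCocone a b :=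
  PushoutCocone.mk (f := a) (g := b)
    (ModuleCat.ofHom ((LinearMap.range (a.hom.prod (-b.hom))).mkQ ∘ₗ LinearMap.inl R B C))
    (ModuleCat.ofHom ((LinearMap.range (a.hom.prod (-b.hom))).mkQ ∘ₗ LinearMap.inr R B C))
    (by
      ext x
      exact (Submodule.Quotient.eq _).mpr ⟨x, by simp; exact ⟨rfl, rfl⟩⟩)

noncomputable def ModuleCat.isColimitQuotientPushoutCocone :
    IsColimit (ModuleCat.quotientPushoutCocone a b) :=
  PushoutCocone.IsColimit.mk _
    (fun s => ModuleCat.ofHom (Submodule.liftQ _ (s.inl.hom.coprod s.inr.hom) (by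
      rintro _ ⟨x, rfl⟩
      simpa [← sub_eq_add_neg, sub_eq_zero] using congr($(s.condition) x))))
    (fun s => by ext; simp)
    (fun s => by ext; simp)
    (fun s m h₁ h₂ => by ext <;> simp [← h₁, ← h₂])

lemma ModuleCat.mono_pushout_desc_iff {D : ModuleCat.{u} R} (g : B ⟶ D) (h : C ⟶ D)
    (w : a ≫ g = b ≫ h) :
    Mono (pushout.desc g h w) ↔ ∀ y z, g y = h z → ∃ x, a x = y ∧ b x = z := by
  have hdesc : pushout.desc g h w = _ ≫ ((ModuleCat.isColimitQuotientPushoutCocone a b).desc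
      (PushoutCocone.mk g h w) : _ ⟶ D) :=
    ((colimit.isColimit (span a b)).coconePointUniqueUpToIso_hom_desc _).symm
  rw [hdesc]
  refine (mono_comp_iff_of_isIso _ _).trans ((ModuleCat.mono_iff_injective _).trans ?_)
  change Function.Injective (Submodule.liftQ _ (g.hom.coprod h.hom) _) ↔ _
  constructor
  · intro hinj y z hyz
    obtain ⟨x, hx⟩ := (Submodule.Quotient.mk_eq_zero _).mp
      (hinj (a₁ := Submodule.Quotient.mk (y, -z)) (a₂ := 0) (by
        rw [map_zero]
        change g y + h (-z) = 0
        rw [map_neg, hyz, add_neg_cancel]))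
    exact ⟨x, congr($hx.1), neg_injective congr($hx.2)⟩
  · intro hsq
    refine (injective_iff_map_eq_zero _).mpr fun q hq => ?_
    obtain ⟨⟨y, z⟩, rfl⟩ := Submodule.Quotient.mk_surjective _ q
    obtain ⟨x, rfl, hx⟩ := hsq y (-z) (by rw [map_neg]; exact eq_neg_of_add_eq_zero_left hq)
    exact (Submodule.Quotient.mk_eq_zero _).mpr ⟨x, by simp [hx]⟩

lemma mono_starMap_iff {F F' : ModuleCat.{u} R ⥤ ModuleCat.{u} R} (α : F ⟶ F')
    {X Y : ModuleCat.{u} R} (f : X ⟶ Y) :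
    Mono (starMap α f) ↔
      ∀ y z, α.app Y y = F'.map f z → ∃ x, F.map f x = y ∧ α.app X x = z :=
  ModuleCat.mono_pushout_desc_iff _ _ _ _ _

lemma ModuleCat.exists_coprod_inl_add_inr {X Y : ModuleCat.{u} R} (p : ↑(X ⨿ Y)) :
    ∃ x y, (coprod.inl : X ⟶ X ⨿ Y) x + (coprod.inr : Y ⟶ X ⨿ Y) y = p := by
  have htotal : coprod.desc (𝟙 X) 0 ≫ coprod.inl + coprod.desc 0 (𝟙 Y) ≫ coprod.inr =
      𝟙 (X ⨿ Y) := by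
    refine coprod.hom_ext ?_ ?_ <;>
      simp only [Preadditive.comp_add, coprod.inl_desc_assoc, coprod.inr_desc_assoc] <;> simp
  exact ⟨_, _, congr($htotal p)⟩

end PushoutCorner

section TensorHom
variable {R V} {M N Z : Type u} [AddCommGroup M] [Module R M] [AddCommGroup N] [Module R N]
  [AddCommGroup Z] [Module R Z]

lemma NTensor.mk_tmul_smul (w : V) (r : R) (m : M) :
    (Submodule.Quotient.mk (w ⊗ₜ (r • m)) : NTensor R V M) =
      Submodule.Quotient.mk ((MulOpposite.op r • w) ⊗ₜ m) := by
  have hrel : (MulOpposite.op r • w) ⊗ₜ[ℤ] m - w ⊗ₜ[ℤ] (r • m) ∈ relators R V M :=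
    Submodule.subset_span ⟨w, r, m, rfl⟩
  exact ((Submodule.Quotient.eq _).mpr hrel).symm

lemma NTensor.linearMap_ext {f g : NTensor R V M →ₗ[R] Z}
    (h : ∀ w m, f (Submodule.Quotient.mk (w ⊗ₜ m)) = g (Submodule.Quotient.mk (w ⊗ₜ m))) :
    f = g := by
  refine Submodule.linearMap_qext _ (LinearMap.ext fun s => ?_)
  induction s using TensorProduct.induction_on with
  | zero => simp
  | tmul w m => exact h w m
  | add s t hs ht => simp_all

lemma ntMap_zero_apply (t : NTensor R V M) : ntMap V (0 : M →ₗ[R] N) t = 0 := by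
  obtain ⟨s, rfl⟩ := Submodule.Quotient.mk_surjective _ t
  change Submodule.Quotient.mk (TensorProduct.map LinearMap.id (0 : M →ₗ[ℤ] N) s) = 0
  rw [TensorProduct.map_zero_right]
  rfl

variable (V) in
noncomputable def NTensor.tmulRight (m : M) : V →ₗ[R] NTensor R V M where
  toFun w := Submodule.Quotient.mk (w ⊗ₜ m)
  map_add' w w' := by simp [TensorProduct.add_tmul]
  map_smul' r w := by
    rw [RingHom.id_apply, ← TensorProduct.smul_tmul', Submodule.Quotient.mk_smul]

variable (R V) in
def HomV (Z : Type u) [AddCommGroup Z] [Module R Z] : Type u := V →ₗ[R] Z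

instance : AddCommGroup (HomV R V Z) := inferInstanceAs (AddCommGroup (V →ₗ[R] Z))

-- `(r • φ) w = φ (w r)`, through the right action of `R` on `V`
noncomputable instance : Module R (HomV R V Z) :=
  Module.compHom (R := (Rᵐᵒᵖ)ᵈᵐᵃ) (V →ₗ[R] Z) (RingEquiv.opOp R).toRingHom

noncomputable def ntensorLift (k : M →ₗ[R] HomV R V Z) : NTensor R V M →ₗ[R] Z :=
  Submodule.liftQ _
    { TensorProduct.lift (LinearMap.mk₂ ℤ (fun w m => (show V →ₗ[R] Z from k m) w)
        (fun _ _ _ => map_add _ _ _) (fun _ _ _ => map_zsmul _ _ _)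
        (fun _ _ _ => by simp; rfl) (fun _ _ _ => by simp; rfl)) with
      map_smul' := fun r s => by
        induction s using TensorProduct.induction_on with
        | zero => simp
        | tmul w m =>
          simpa [TensorProduct.smul_tmul'] using map_smul (show V →ₗ[R] Z from k m) r w
        | add s t hs ht => simp_all }
    (by
      rw [relators, Submodule.span_le]
      rintro _ ⟨w, r, m, rfl⟩
      simp only [SetLike.mem_coe, LinearMap.mem_ker, map_sub]
      exact sub_eq_zero.mpr (congrArg (fun φ : HomV R V Z => (show V →ₗ[R] Z from φ) w)
        (map_smul k r m)).symm)

noncomputable def ntensorHomEquiv : (M →ₗ[R] HomV R V Z) ≃ (NTensor R V M →ₗ[R] Z) where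
  toFun := ntensorLift
  invFun h :=
    { toFun m := (h ∘ₗ NTensor.tmulRight V m : V →ₗ[R] Z)
      map_add' m m' := LinearMap.ext fun w => by
        simp [NTensor.tmulRight, TensorProduct.tmul_add]
        rfl
      map_smul' r m := LinearMap.ext fun w => by
        simp [NTensor.tmulRight, NTensor.mk_tmul_smul]
        rfl }
  left_inv k := by ext m; rfl
  right_inv h := NTensor.linearMap_ext fun _ _ => rfl

end TensorHom

section LeftAdjoint

noncomputable def cylHomEquiv (M Z : ModuleCat.{u} R) :
    ((cylFunctor (R := R) V).obj M ⟶ Z) ≃ (M ⟶ ModuleCat.of R (Z × HomV R V Z)) :=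
  ModuleCat.homEquiv.trans <| (LinearMap.coprodEquiv ℕ).toEquiv.symm.trans <|
    (Equiv.prodCongr (Equiv.refl _) ntensorHomEquiv.symm).trans <|
    (LinearMap.prodEquiv (S := ℕ)).toEquiv.trans
      (ModuleCat.homEquiv (N := .of R (Z × HomV R V Z))).symm

lemma cylFunctor_isLeftAdjoint : (cylFunctor (R := R) V).IsLeftAdjoint :=
  (Adjunction.adjunctionOfEquivRight (cylHomEquiv R V) fun _ _ _ f g => by
    ext m
    · rfl
    · refine LinearMap.ext fun w => ?_
      change g (f 0, ntMap V f.hom (Submodule.Quotient.mk (w ⊗ₜ m))) =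
        g (0, Submodule.Quotient.mk (w ⊗ₜ f m))
      rw [map_zero]
      rfl).isLeftAdjoint

end LeftAdjoint

section CylinderStar
variable {R V} (v : R →ₗ[R] V) (hv : ∀ x s : R, v (x * s) = MulOpposite.op s • v x)

lemma ntMap_vMap {M N : Type u} [AddCommGroup M] [Module R M] [AddCommGroup N] [Module R N]
    (f : M →ₗ[R] N) (m : M) : ntMap V f (vMap R V v hv M m) = vMap R V v hv N (f m) :=
  rfl

lemma exists_eq_and_vMap_eq_of_ntMap_eq_vMap {M N : Type u} [AddCommGroup M] [Module R M]
    [AddCommGroup N] [Module R N] (f : M →ₗ[R] N)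
    (hpure : Function.Injective (vMap R V v hv (N ⧸ LinearMap.range f)))
    (hflat : Function.Injective (ntMap V f)) {t : NTensor R V M} {n : N}
    (h : ntMap V f t = vMap R V v hv N n) :
    ∃ m, f m = n ∧ vMap R V v hv M m = t := by
  set π := (LinearMap.range f).mkQ
  have hπn : vMap R V v hv _ (π n) = 0 := by
    rw [← ntMap_vMap, ← h, ← LinearMap.comp_apply, ← ntMap_comp, LinearMap.range_mkQ_comp,
      ntMap_zero_apply]
  obtain ⟨m, rfl⟩ : n ∈ LinearMap.range f :=
    (Submodule.Quotient.mk_eq_zero _).mp (hpure (hπn.trans (map_zero _).symm))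
  exact ⟨m, rfl, hflat (by rw [ntMap_vMap, h])⟩

variable {M N : ModuleCat.{u} R}

lemma cylV_γ₀_app_apply (m : M) :
    (cylV R V v hv).γ₀.app M m = ((m, 0) : M × NTensor R V M) :=
  congr($(coprod.inl_desc (cylInl R V M) (cylInr R V v hv M)) m)

lemma cylV_γ₁_app_apply (m : M) :
    (cylV R V v hv).γ₁.app M m = ((m, vMap R V v hv M m) : M × NTensor R V M) :=
  congr($(coprod.inr_desc (cylInl R V M) (cylInr R V v hv M)) m)

lemma cylV_γ_app_inl_add_inr (m₁ m₂ : M) :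
    (cylV R V v hv).γ.app M
        ((coprod.inl : M ⟶ M ⨿ M) m₁ + (coprod.inr : M ⟶ M ⨿ M) m₂) =
      ((m₁ + m₂, vMap R V v hv M m₂) : M × NTensor R V M) :=
  (map_add ((cylV R V v hv).γ.app M).hom _ _).trans
    (congr($(cylV_γ₀_app_apply v hv m₁) + $(cylV_γ₁_app_apply v hv m₂)).trans
      (Prod.ext rfl (zero_add _)))

lemma double_map_inl_add_inr (f : M ⟶ N) (m₁ m₂ : M) :
    (double (ModuleCat.{u} R)).map f
        ((coprod.inl : M ⟶ M ⨿ M) m₁ + (coprod.inr : M ⟶ M ⨿ M) m₂) =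
      (coprod.inl : N ⟶ N ⨿ N) (f m₁) + (coprod.inr : N ⟶ N ⨿ N) (f m₂) :=
  (map_add ((double (ModuleCat.{u} R)).map f).hom _ _).trans
    congr($(coprod.inl_map f f) m₁ + $(coprod.inr_map f f) m₂)

lemma mono_starMap_cylV_γ₀_iff (f : M ⟶ N) :
    Mono (starMap (cylV R V v hv).γ₀ f) ↔ Function.Injective (ntMap V f.hom) := by
  rw [mono_starMap_iff]
  constructor
  · intro h
    refine (injective_iff_map_eq_zero _).mpr fun t ht => ?_
    obtain ⟨x, -, hx⟩ := h 0 ((0, t) : M × NTensor R V M) (by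
      rw [map_zero]
      exact Prod.ext (map_zero f.hom).symm ht.symm)
    rw [cylV_γ₀_app_apply] at hx
    exact congr(Prod.snd $hx).symm
  · rintro hinj n ⟨m, t⟩ h
    rw [cylV_γ₀_app_apply] at h
    have ht : ntMap V f.hom t = 0 := congr(Prod.snd $h).symm
    refine ⟨m, congr(Prod.fst $h).symm, ?_⟩
    rw [cylV_γ₀_app_apply, hinj (ht.trans (map_zero _).symm)]

lemma mono_starMap_cylV_γ₁ (f : M ⟶ N) (hflat : Function.Injective (ntMap V f.hom)) :
    Mono (starMap (cylV R V v hv).γ₁ f) := by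
  rw [mono_starMap_iff]
  rintro n ⟨m, t⟩ h
  rw [cylV_γ₁_app_apply] at h
  have hn : f m = n := congr(Prod.fst $h).symm
  have ht : ntMap V f.hom (vMap R V v hv M m) = ntMap V f.hom t := by
    rw [ntMap_vMap, hn]
    exact congr(Prod.snd $h)
  refine ⟨m, hn, ?_⟩
  rw [cylV_γ₁_app_apply, hflat ht]

lemma mono_starMap_cylV_γ (f : M ⟶ N)
    (hpure : Function.Injective (vMap R V v hv (N ⧸ LinearMap.range f.hom)))
    (hflat : Function.Injective (ntMap V f.hom)) :
    Mono (starMap (cylV R V v hv).γ f) := by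
  rw [mono_starMap_iff]
  rintro p ⟨m, t⟩ h
  obtain ⟨n₁, n₂, rfl⟩ := ModuleCat.exists_coprod_inl_add_inr p
  rw [cylV_γ_app_inl_add_inr] at h
  have hsum : n₁ + n₂ = f m := congr(Prod.fst $h)
  have hn₂ : ntMap V f.hom t = vMap R V v hv N n₂ := (congr(Prod.snd $h)).symm
  obtain ⟨m₂, rfl, rfl⟩ := exists_eq_and_vMap_eq_of_ntMap_eq_vMap v hv f.hom hpure hflat hn₂
  refine ⟨(coprod.inl : M ⟶ M ⨿ M) (m - m₂) + (coprod.inr : M ⟶ M ⨿ M) m₂, ?_, ?_⟩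
  · rw [double_map_inl_add_inr, map_sub, ← hsum, add_sub_cancel_right]
  · rw [cylV_γ_app_inl_add_inr, sub_add_cancel]

end CylinderStar

/-- if `v : R → V` is a map of `R`-`R`-bimodules which is a pure
monomorphism of right `R`-modules (so that `(Cyl_v, γ, σ)` with
`Cyl_v(M) = M ⊕ (V ⊗_R M)` is a cylinder for `(Mono, Mono^□)` on left `R`-modules),
then this cylinder is cartesian if and only if `V` is flat as a right `R`-module
(i.e. `V ⊗_R −` preserves injectivity). -/
theorem statement6 (R : Type u) [Ring R] (V : Type u) [AddCommGroup V] [Module R V]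
    [Module Rᵐᵒᵖ V] [SMulCommClass R Rᵐᵒᵖ V]
    (v : R →ₗ[R] V) (hv : ∀ x s : R, v (x * s) = MulOpposite.op s • v x)
    (hpure : ∀ (M : Type u) [AddCommGroup M] [Module R M],
      Function.Injective (vMap R V v hv M)) :
    (cylV R V v hv).IsCartesian (MorphismProperty.monomorphisms (ModuleCat.{u} R)) ↔
    (∀ (M N : Type u) [AddCommGroup M] [Module R M] [AddCommGroup N] [Module R N]
      (f : M →ₗ[R] N), Function.Injective f → Function.Injective (ntMap V f)) := by
  constructor
  · intro hcart M N _ _ _ _ f hf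
    exact (mono_starMap_cylV_γ₀_iff v hv (ModuleCat.ofHom f)).mp
      (hcart.star_γ₀ _ ((ModuleCat.mono_iff_injective _).mpr hf))
  · intro hflat
    have hmono {M N : ModuleCat.{u} R} (f : M ⟶ N) (hf : Mono f) :
        Function.Injective (ntMap V f.hom) :=
      hflat M N f.hom ((ModuleCat.mono_iff_injective f).mp hf)
    exact ⟨cylFunctor_isLeftAdjoint R V,
      fun _ _ f hf => mono_starMap_cylV_γ v hv f (hpure _) (hmono f hf),
      fun _ _ f hf => (mono_starMap_cylV_γ₀_iff v hv f).mpr (hmono f hf),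
      fun _ _ f hf => mono_starMap_cylV_γ₁ v hv f (hmono f hf)⟩

end Modules
end Paper
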